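/- arXiv:1802.07773 — 4 statements merged into one kernel-verified Lean document; each statement's English description precedes it below -/
import Mathlib

section
/- Let b_u, b_v, b_w be i.i.d. Bernoulli(p) with p ∈ (0,1). With the choice α = 1/p and β = (2p−1)/p², the kernel K_A = α(b_u(1−b_v) + b_v(1−b_u)) + β b_u b_v satisfies E[K_A] = 1 and Cov(K_A, K_{A'}) = 0, where K_{A'} is the analogous kernel on the edge {v,w}. -/
/-- Weight of a Bernoulli(p) outcome: `p` for sampled, `q = 1 - p` otherwise. -/
def bwt (p : ℝ) (b : Bool) : ℝ := if b then p else 1 - p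

/-- Real indicator of a Boolean. -/
def ind (b : Bool) : ℝ := if b then 1 else 0

/-- Expectation of a function of three i.i.d. Bernoulli(p) variables. -/
def E3 (p : ℝ) (f : Bool → Bool → Bool → ℝ) : ℝ :=
  ∑ bu : Bool, ∑ bv : Bool, ∑ bw : Bool,
    bwt p bu * bwt p bv * bwt p bw * f bu bv bw

/-- The edge kernel `K` of the two-parameter linear estimator. -/
def K (α β : ℝ) (a b : Bool) : ℝ :=
  α * (ind a * (1 - ind b) + ind b * (1 - ind a)) + β * (ind a * ind b)

/-!
Conditionally on the shared vertex `v`, the kernels on `{u,v}` and `{v,w}` are independent, and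
with `α = 1/p`, `β = (2p − 1)/p²` the conditional mean of each kernel given `b_v` is `1` whatever
`b_v` is: for `b_v = 0` it is `α p`, for `b_v = 1` it is `α (1 − p) + β p`. Hence both kernels have
mean `1`, their product has mean `1`, and the covariance vanishes.
-/

theorem sum_bwt (p : ℝ) : ∑ b : Bool, bwt p b = 1 := by
  simp [bwt]

theorem K_comm (α β : ℝ) (a b : Bool) : K α β a b = K α β b a := by
  simp only [K]
  ring

section E3

variable (p : ℝ)

theorem E3_fun_fst_snd (f : Bool → Bool → ℝ) :
    E3 p (fun a b _ => f a b) = ∑ b, bwt p b * ∑ a, bwt p a * f a b := by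
  simp only [E3, bwt, Fintype.sum_bool, Bool.false_eq_true, ↓reduceIte]
  ring

theorem E3_fun_snd_thd (f : Bool → Bool → ℝ) :
    E3 p (fun _ b c => f b c) = ∑ b, bwt p b * ∑ c, bwt p c * f b c := by
  simp only [E3, bwt, Fintype.sum_bool, Bool.false_eq_true, ↓reduceIte]
  ring

theorem E3_mul_of_shared_snd (f g : Bool → Bool → ℝ) :
    E3 p (fun a b c => f a b * g b c)
      = ∑ b, bwt p b * ((∑ a, bwt p a * f a b) * ∑ c, bwt p c * g b c) := by
  simp only [E3, bwt, Fintype.sum_bool, Bool.false_eq_true, ↓reduceIte]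
  ring

end E3

theorem sum_bwt_mul_K_unbiased {p : ℝ} (hp : p ≠ 0) (b : Bool) :
    ∑ a, bwt p a * K (1 / p) ((2 * p - 1) / p ^ 2) a b = 1 := by
  cases b <;>
  · simp only [K, bwt, ind, Fintype.sum_bool, Bool.false_eq_true, ↓reduceIte]
    field_simp
    ring

theorem stmt_6_general (p : ℝ) (hp0 : 0 < p) :
    (E3 p fun bu bv _ => K (1 / p) ((2 * p - 1) / p ^ 2) bu bv) = 1
    ∧ (E3 p fun bu bv bw =>
          K (1 / p) ((2 * p - 1) / p ^ 2) bu bv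
            * K (1 / p) ((2 * p - 1) / p ^ 2) bv bw)
        - (E3 p fun bu bv _ => K (1 / p) ((2 * p - 1) / p ^ 2) bu bv)
          * (E3 p fun _ bv bw => K (1 / p) ((2 * p - 1) / p ^ 2) bv bw)
      = 0 := by
  have hK := sum_bwt_mul_K_unbiased hp0.ne'
  have hK' (b : Bool) : ∑ c, bwt p c * K (1 / p) ((2 * p - 1) / p ^ 2) b c = 1 := by
    simpa only [K_comm _ _ b] using hK b
  have hmean : (E3 p fun bu bv _ => K (1 / p) ((2 * p - 1) / p ^ 2) bu bv) = 1 := by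
    simp only [E3_fun_fst_snd, hK, mul_one, sum_bwt]
  refine ⟨hmean, ?_⟩
  simp only [E3_mul_of_shared_snd, E3_fun_snd_thd, hK, hK', hmean, mul_one, sum_bwt, sub_self]

/-- With `α = 1/p` and `β = (2p − 1)/p²`, the edge kernel is unbiased and
the covariance of the kernels on two edges sharing exactly one vertex
vanishes. -/
theorem stmt_6 (p : ℝ) (hp0 : 0 < p) (hp1 : p < 1) :
    (E3 p fun bu bv _ => K (1 / p) ((2 * p - 1) / p ^ 2) bu bv) = 1
    ∧ (E3 p fun bu bv bw =>
          K (1 / p) ((2 * p - 1) / p ^ 2) bu bv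
            * K (1 / p) ((2 * p - 1) / p ^ 2) bv bw)
        - (E3 p fun bu bv _ => K (1 / p) ((2 * p - 1) / p ^ 2) bu bv)
          * (E3 p fun _ bv bw => K (1 / p) ((2 * p - 1) / p ^ 2) bv bw)
      = 0 :=
  stmt_6_general p hp0
end

section
/- Fix an integer ω ≥ 2 and reals α, β. Let (b_v) be i.i.d. Bernoulli(p) random variables indexed by vertices, q = 1−p. For a vertex set T of size ω define f(T) = α · Σ_{v∈T} (1−b_v)·Π_{u∈T∖{v}} b_u + β · Π_{v∈T} b_v. Then for any two ω-sets T, T' with |T ∩ T'| = t where 1 ≤ t ≤ ω, E[f(T) f(T')] = α²(t q p^{2ω−t−1} + (ω−t)² q² p^{2ω−t−2}) + 2(ω−t) q p^{2ω−t−1} αβ + β² p^{2ω−t}. -/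
open Finset


/-- The clique-estimator kernel: `f(T) = α·Σ_{v∈T}(1−b_v)·Π_{u∈T∖{v}} b_u
+ β·Π_{v∈T} b_v`. -/
noncomputable def fT {V : Type*} [DecidableEq V] (α β : ℝ) (T : Finset V)
    (b : V → Bool) : ℝ :=
  α * ∑ v ∈ T, (1 - ind (b v)) * ∏ u ∈ T.erase v, ind (b u)
    + β * ∏ v ∈ T, ind (b v)

lemma prod_ind {V : Type*} [DecidableEq V] (b : V → Bool) (S : Finset V) :
    ∏ u ∈ S, ind (b u) = if ∀ u ∈ S, b u = true then 1 else 0 := by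
  simp only [ind]
  exact Finset.prod_boole (p := fun u => b u = true)

lemma prod_ind_union {V : Type*} [DecidableEq V] (b : V → Bool) (A B : Finset V) :
    (∏ u ∈ A, ind (b u)) * ∏ u ∈ B, ind (b u) = ∏ u ∈ A ∪ B, ind (b u) := by
  simp only [prod_ind]
  have : (∀ u ∈ A ∪ B, b u = true) ↔ (∀ u ∈ A, b u = true) ∧ ∀ u ∈ B, b u = true :=
    Finset.forall_mem_union
  split_ifs with h1 h2 h3 <;> simp_all

section helpers
variable {V : Type*} [Fintype V] [DecidableEq V] {p q : ℝ}

lemma expect_factor (p q : ℝ) (g : V → Bool → ℝ) :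
    ∑ b : V → Bool, (∏ v : V, (if b v then p else q)) * ∏ v : V, g v (b v)
    = ∏ v : V, (p * g v true + q * g v false) := by
  have h : ∀ b : V → Bool,
      (∏ v : V, (if b v then p else q)) * ∏ v : V, g v (b v)
      = ∏ v : V, ((if b v then p else q) * g v (b v)) := fun b =>
    (Finset.prod_mul_distrib).symm
  simp_rw [h]
  have h2 : ∀ v : V, (p * g v true + q * g v false)
      = ∑ x : Bool, (if x then p else q) * g v x := by
    intro v; simp [Fintype.sum_bool]
  rw [Finset.prod_congr rfl fun v _ => h2 v, Finset.prod_univ_sum,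
    Fintype.piFinset_univ]

lemma E_prod (hpq : p + q = 1) (S : Finset V) :
    ∑ b : V → Bool, (∏ u : V, (if b u then p else q)) * ∏ u ∈ S, ind (b u)
    = p ^ S.card := by
  have key : ∀ b : V → Bool, ∏ u ∈ S, ind (b u)
      = ∏ u : V, (if u ∈ S then ind (b u) else 1) := by
    intro b; rw [Finset.prod_ite_mem univ S, Finset.univ_inter]
  simp_rw [key]
  rw [expect_factor p q (fun u x => if u ∈ S then ind x else 1)]
  have h : ∀ u : V, (p * (if u ∈ S then ind true else 1) + q * (if u ∈ S then ind false else 1))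
      = (if u ∈ S then p else 1) := by
    intro u; by_cases h : u ∈ S <;> simp [h, ind] <;> linarith
  rw [Finset.prod_congr rfl fun u _ => h u, Finset.prod_ite_mem univ S,
    Finset.univ_inter, Finset.prod_const]

lemma E_one (hpq : p + q = 1) (v : V) (A B : Finset V) :
    ∑ b : V → Bool, (∏ u : V, (if b u then p else q)) *
      ((1 - ind (b v)) * (∏ u ∈ A, ind (b u)) * ∏ u ∈ B, ind (b u))
    = if v ∈ A ∪ B then 0 else q * p ^ (A ∪ B).card := by
  have key : ∀ b : V → Bool,
      (1 - ind (b v)) * (∏ u ∈ A, ind (b u)) * ∏ u ∈ B, ind (b u)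
      = ∏ u : V, ((if u = v then 1 - ind (b u) else 1) *
          (if u ∈ A ∪ B then ind (b u) else 1)) := by
    intro b
    rw [Finset.prod_mul_distrib, Finset.prod_ite_eq' univ v,
      Finset.prod_ite_mem univ (A ∪ B), Finset.univ_inter]
    simp only [Finset.mem_univ, if_true]
    rw [mul_assoc, prod_ind_union]
  simp_rw [key]
  rw [expect_factor p q (fun u x => (if u = v then 1 - ind x else 1) *
      (if u ∈ A ∪ B then ind x else 1))]
  by_cases hv : v ∈ A ∪ B
  · rw [if_pos hv]
    refine Finset.prod_eq_zero (Finset.mem_univ v) ?_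
    simp [ind, hv]
  · rw [if_neg hv]
    have hc : ∀ u : V,
        (p * ((if u = v then 1 - ind true else 1) * (if u ∈ A ∪ B then ind true else 1))
          + q * ((if u = v then 1 - ind false else 1) * (if u ∈ A ∪ B then ind false else 1)))
        = (if u = v then q else 1) * (if u ∈ A ∪ B then p else 1) := by
      intro u
      by_cases h1 : u = v <;> by_cases h2 : u ∈ A ∪ B
      · exact absurd (h1 ▸ h2) hv
      · simp [h1, h2, ind]
        have hnv : ¬(v ∈ A ∨ v ∈ B) := by rw [← Finset.mem_union]; exact hv
        rw [if_neg hnv, if_neg hnv]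
      · simp [h1, h2, ind]
      · simp [h1, h2, ind]; linarith
    rw [Finset.prod_congr rfl fun u _ => hc u, Finset.prod_mul_distrib,
      Finset.prod_ite_eq' univ v, Finset.prod_ite_mem univ (A ∪ B),
      Finset.univ_inter, Finset.prod_const]
    simp

lemma E_pair (hpq : p + q = 1) (v w : V) (A B : Finset V) :
    ∑ b : V → Bool, (∏ u : V, (if b u then p else q)) *
      ((1 - ind (b v)) * (∏ u ∈ A, ind (b u)) * ((1 - ind (b w)) * ∏ u ∈ B, ind (b u)))
    = if v ∈ A ∪ B ∨ w ∈ A ∪ B then 0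
      else (if v = w then q else q ^ 2) * p ^ (A ∪ B).card := by
  have key : ∀ b : V → Bool,
      (1 - ind (b v)) * (∏ u ∈ A, ind (b u)) * ((1 - ind (b w)) * ∏ u ∈ B, ind (b u))
      = ∏ u : V, ((if u = v then 1 - ind (b u) else 1) *
          ((if u = w then 1 - ind (b u) else 1) *
            (if u ∈ A ∪ B then ind (b u) else 1))) := by
    intro b
    rw [Finset.prod_mul_distrib, Finset.prod_mul_distrib,
      Finset.prod_ite_eq' univ v, Finset.prod_ite_eq' univ w,
      Finset.prod_ite_mem univ (A ∪ B), Finset.univ_inter]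
    simp only [Finset.mem_univ, if_true]
    rw [← prod_ind_union]
    ring
  simp_rw [key]
  rw [expect_factor p q (fun u x => (if u = v then 1 - ind x else 1) *
      ((if u = w then 1 - ind x else 1) * (if u ∈ A ∪ B then ind x else 1)))]
  by_cases hvw : v ∈ A ∪ B ∨ w ∈ A ∪ B
  · rw [if_pos hvw]
    rcases hvw with h | h
    · refine Finset.prod_eq_zero (Finset.mem_univ v) ?_; simp [ind, h]
    · refine Finset.prod_eq_zero (Finset.mem_univ w) ?_; simp [ind, h]
  · rw [if_neg hvw]
    push_neg at hvw
    obtain ⟨hv, hw⟩ := hvw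
    by_cases hvw2 : v = w
    · subst hvw2
      rw [if_pos rfl]
      have hc : ∀ u : V,
          (p * ((if u = v then 1 - ind true else 1) *
              ((if u = v then 1 - ind true else 1) * (if u ∈ A ∪ B then ind true else 1)))
            + q * ((if u = v then 1 - ind false else 1) *
              ((if u = v then 1 - ind false else 1) * (if u ∈ A ∪ B then ind false else 1))))
          = (if u = v then q else 1) * (if u ∈ A ∪ B then p else 1) := by
        intro u
        by_cases h1 : u = v <;> by_cases h2 : u ∈ A ∪ B
        · exact absurd (h1 ▸ h2) hv
        · simp [h1, h2, ind]
          have hnv : ¬(v ∈ A ∨ v ∈ B) := by rw [← Finset.mem_union]; exact hv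
          rw [if_neg hnv, if_neg hnv]
        · simp [h1, h2, ind]
        · simp [h1, h2, ind]; linarith
      rw [Finset.prod_congr rfl fun u _ => hc u, Finset.prod_mul_distrib,
        Finset.prod_ite_eq' univ v, Finset.prod_ite_mem univ (A ∪ B),
        Finset.univ_inter, Finset.prod_const]
      simp
    · rw [if_neg hvw2]
      have hc : ∀ u : V,
          (p * ((if u = v then 1 - ind true else 1) *
              ((if u = w then 1 - ind true else 1) * (if u ∈ A ∪ B then ind true else 1)))
            + q * ((if u = v then 1 - ind false else 1) *
              ((if u = w then 1 - ind false else 1) * (if u ∈ A ∪ B then ind false else 1))))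
          = (if u = v then q else 1) *
              ((if u = w then q else 1) * (if u ∈ A ∪ B then p else 1)) := by
        intro u
        by_cases h1 : u = v <;> by_cases h2 : u = w <;> by_cases h3 : u ∈ A ∪ B
        · exact absurd (h1.symm.trans h2) hvw2
        · exact absurd (h1.symm.trans h2) hvw2
        · exact absurd (h1 ▸ h3) hv
        · simp [h1, h2, ind]
          have hnv : ¬(v ∈ A ∨ v ∈ B) := by rw [← Finset.mem_union]; exact hv
          rw [if_neg hnv, if_neg hnv, if_neg hvw2]
        · exact absurd (h2 ▸ h3) hw
        · simp [h1, h2, ind]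
          have hnw : ¬(w ∈ A ∨ w ∈ B) := by rw [← Finset.mem_union]; exact hw
          rw [if_neg hnw, if_neg hnw, if_neg (fun h => hvw2 h.symm)]
        · simp [h1, h2, h3, ind]
        · simp [h1, h2, h3, ind]; linarith
      rw [Finset.prod_congr rfl fun u _ => hc u, Finset.prod_mul_distrib,
        Finset.prod_ite_eq' univ v]
      rw [Finset.prod_mul_distrib, Finset.prod_ite_eq' univ w,
        Finset.prod_ite_mem univ (A ∪ B), Finset.univ_inter, Finset.prod_const]
      simp; ring

end helpers

/-- Second moment formula for the clique-count estimator: for ω-sets `T`, `T'`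
with `|T ∩ T'| = t`, `1 ≤ t ≤ ω`,
`E[f(T)f(T')] = α²(t q p^{2ω−t−1} + (ω−t)² q² p^{2ω−t−2})
+ 2(ω−t) q p^{2ω−t−1} αβ + β² p^{2ω−t}`. -/

theorem stmt_7 {V : Type*} [Fintype V] [DecidableEq V]
    (ω t : ℕ) (hω : 2 ≤ ω) (α β : ℝ)
    (p q : ℝ) (hq : q = 1 - p) (hp0 : 0 ≤ p) (hp1 : p ≤ 1)
    (T T' : Finset V) (hT : T.card = ω) (hT' : T'.card = ω)
    (ht : (T ∩ T').card = t) (ht1 : 1 ≤ t) (htω : t ≤ ω) :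
    (∑ b : V → Bool,
        (∏ v : V, (if b v then p else q)) * (fT α β T b * fT α β T' b))
      = α ^ 2 * ((t : ℝ) * q * p ^ (2 * ω - t - 1)
            + ((ω - t : ℕ) : ℝ) ^ 2 * q ^ 2 * p ^ (2 * ω - t - 2))
        + 2 * ((ω - t : ℕ) : ℝ) * q * p ^ (2 * ω - t - 1) * (α * β)
        + β ^ 2 * p ^ (2 * ω - t) := by
  have hpq : p + q = 1 := by rw [hq]; ring
  -- cardinality facts
  have hU : (T ∪ T').card = 2 * ω - t := by
    have h := Finset.card_union_add_card_inter T T'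
    omega
  have hTd : (T \ T').card = ω - t := by
    have h := Finset.card_sdiff_add_card_inter T T'
    omega
  have hT'd : (T' \ T).card = ω - t := by
    have h := Finset.card_sdiff_add_card_inter T' T
    rw [Finset.inter_comm] at h
    omega
  -- the four pieces
  have hX4 : ∑ b : V → Bool, (∏ u : V, (if b u then p else q)) *
      ((∏ v ∈ T, ind (b v)) * ∏ v ∈ T', ind (b v)) = p ^ (2 * ω - t) := by
    have h : ∀ b : V → Bool, (∏ v ∈ T, ind (b v)) * ∏ v ∈ T', ind (b v)
        = ∏ v ∈ T ∪ T', ind (b v) := fun b => prod_ind_union b T T'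
    simp_rw [h]
    rw [E_prod hpq, hU]
  have hX2 : ∑ b : V → Bool, (∏ u : V, (if b u then p else q)) *
      ((∑ v ∈ T, (1 - ind (b v)) * ∏ u ∈ T.erase v, ind (b u)) * ∏ v ∈ T', ind (b v))
      = ((ω - t : ℕ) : ℝ) * (q * p ^ (2 * ω - t - 1)) := by
    have h : ∀ b : V → Bool,
        (∑ v ∈ T, (1 - ind (b v)) * ∏ u ∈ T.erase v, ind (b u)) * ∏ v ∈ T', ind (b v)
        = ∑ v ∈ T, (1 - ind (b v)) * (∏ u ∈ T.erase v, ind (b u)) * ∏ u ∈ T', ind (b u) := by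
      intro b; rw [Finset.sum_mul]
    simp_rw [h, Finset.mul_sum]
    rw [Finset.sum_comm]
    have h2 : ∀ v ∈ T, (∑ b : V → Bool, (∏ u : V, (if b u then p else q)) *
        ((1 - ind (b v)) * (∏ u ∈ T.erase v, ind (b u)) * ∏ u ∈ T', ind (b u)))
        = if v ∈ T' then 0 else q * p ^ (2 * ω - t - 1) := by
      intro v hv
      rw [E_one hpq v (T.erase v) T']
      by_cases hv' : v ∈ T'
      · rw [if_pos (Finset.mem_union_right _ hv'), if_pos hv']
      · have hmem : v ∉ T.erase v ∪ T' := by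
          simp [Finset.mem_union, hv']
        rw [if_neg hmem, if_neg hv']
        congr 2
        have hcard : (T.erase v ∪ T').card = 2 * ω - t - 1 := by
          have h3 := Finset.card_union_add_card_inter (T.erase v) T'
          have h4 : (T.erase v) ∩ T' = T ∩ T' := by
            ext x
            simp only [Finset.mem_inter, Finset.mem_erase]
            constructor
            · rintro ⟨⟨_, hx⟩, hx'⟩; exact ⟨hx, hx'⟩
            · rintro ⟨hx, hx'⟩
              exact ⟨⟨fun he => hv' (he ▸ hx'), hx⟩, hx'⟩
          rw [h4, ht, Finset.card_erase_of_mem hv, hT, hT'] at h3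
          omega
        rw [hcard]
    rw [Finset.sum_congr rfl h2, Finset.sum_ite, Finset.sum_const, Finset.sum_const,
      smul_zero, zero_add]
    have hfil : T.filter (fun v => ¬v ∈ T') = T \ T' := (Finset.sdiff_eq_filter T T').symm
    rw [hfil, hTd, nsmul_eq_mul]
  have hX3 : ∑ b : V → Bool, (∏ u : V, (if b u then p else q)) *
      ((∏ v ∈ T, ind (b v)) * ∑ w ∈ T', (1 - ind (b w)) * ∏ u ∈ T'.erase w, ind (b u))
      = ((ω - t : ℕ) : ℝ) * (q * p ^ (2 * ω - t - 1)) := by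
    have h : ∀ b : V → Bool,
        (∏ v ∈ T, ind (b v)) * ∑ w ∈ T', (1 - ind (b w)) * ∏ u ∈ T'.erase w, ind (b u)
        = ∑ w ∈ T', (1 - ind (b w)) * (∏ u ∈ T'.erase w, ind (b u)) * ∏ u ∈ T, ind (b u) := by
      intro b
      rw [Finset.mul_sum]
      exact Finset.sum_congr rfl fun w _ => by ring
    simp_rw [h, Finset.mul_sum]
    rw [Finset.sum_comm]
    have h2 : ∀ w ∈ T', (∑ b : V → Bool, (∏ u : V, (if b u then p else q)) *
        ((1 - ind (b w)) * (∏ u ∈ T'.erase w, ind (b u)) * ∏ u ∈ T, ind (b u)))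
        = if w ∈ T then 0 else q * p ^ (2 * ω - t - 1) := by
      intro w hw
      rw [E_one hpq w (T'.erase w) T]
      by_cases hw' : w ∈ T
      · rw [if_pos (Finset.mem_union_right _ hw'), if_pos hw']
      · have hmem : w ∉ T'.erase w ∪ T := by
          simp [Finset.mem_union, hw']
        rw [if_neg hmem, if_neg hw']
        congr 2
        have h3 := Finset.card_union_add_card_inter (T'.erase w) T
        have h4 : (T'.erase w) ∩ T = T ∩ T' := by
          ext x
          simp only [Finset.mem_inter, Finset.mem_erase]
          constructor
          · rintro ⟨⟨_, hx⟩, hx'⟩; exact ⟨hx', hx⟩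
          · rintro ⟨hx, hx'⟩
            exact ⟨⟨fun he => hw' (he ▸ hx), hx'⟩, hx⟩
        rw [h4, ht, Finset.card_erase_of_mem hw, hT, hT'] at h3
        omega
    rw [Finset.sum_congr rfl h2, Finset.sum_ite, Finset.sum_const, Finset.sum_const,
      smul_zero, zero_add]
    have hfil : T'.filter (fun w => ¬w ∈ T) = T' \ T := (Finset.sdiff_eq_filter T' T).symm
    rw [hfil, hT'd, nsmul_eq_mul]
  have hX1 : ∑ b : V → Bool, (∏ u : V, (if b u then p else q)) *
      ((∑ v ∈ T, (1 - ind (b v)) * ∏ u ∈ T.erase v, ind (b u)) *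
        ∑ w ∈ T', (1 - ind (b w)) * ∏ u ∈ T'.erase w, ind (b u))
      = (t : ℝ) * (q * p ^ (2 * ω - t - 1))
        + ((ω - t : ℕ) : ℝ) * (((ω - t : ℕ) : ℝ) * (q ^ 2 * p ^ (2 * ω - t - 2))) := by
    have h : ∀ b : V → Bool,
        (∑ v ∈ T, (1 - ind (b v)) * ∏ u ∈ T.erase v, ind (b u)) *
          ∑ w ∈ T', (1 - ind (b w)) * ∏ u ∈ T'.erase w, ind (b u)
        = ∑ v ∈ T, ∑ w ∈ T', (1 - ind (b v)) * (∏ u ∈ T.erase v, ind (b u)) *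
            ((1 - ind (b w)) * ∏ u ∈ T'.erase w, ind (b u)) := by
      intro b
      rw [Finset.sum_mul_sum]
    simp_rw [h, Finset.mul_sum]
    rw [Finset.sum_comm]
    have hinner : ∀ v ∈ T,
        (∑ b : V → Bool, ∑ w ∈ T', (∏ u : V, (if b u then p else q)) *
          ((1 - ind (b v)) * (∏ u ∈ T.erase v, ind (b u)) *
            ((1 - ind (b w)) * ∏ u ∈ T'.erase w, ind (b u))))
        = if v ∈ T' then q * p ^ (2 * ω - t - 1)
          else ((ω - t : ℕ) : ℝ) * (q ^ 2 * p ^ (2 * ω - t - 2)) := by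
      intro v hv
      rw [Finset.sum_comm]
      have hval : ∀ w ∈ T',
          (∑ b : V → Bool, (∏ u : V, (if b u then p else q)) *
            ((1 - ind (b v)) * (∏ u ∈ T.erase v, ind (b u)) *
              ((1 - ind (b w)) * ∏ u ∈ T'.erase w, ind (b u))))
          = if v ∈ T.erase v ∪ T'.erase w ∨ w ∈ T.erase v ∪ T'.erase w then 0
            else (if v = w then q else q ^ 2) * p ^ (T.erase v ∪ T'.erase w).card :=
        fun w _ => E_pair hpq v w (T.erase v) (T'.erase w)
      rw [Finset.sum_congr rfl hval]
      by_cases hv' : v ∈ T'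
      · rw [if_pos hv']
        rw [Finset.sum_eq_single_of_mem v hv' ?side]
        case side =>
          intro w hw hne
          rw [if_pos (Or.inl (Finset.mem_union_right _
            (Finset.mem_erase.2 ⟨fun h => hne (h.symm), hv'⟩)))]
        have hmem : v ∉ T.erase v ∪ T'.erase v := by simp
        rw [if_neg (by push_neg; exact ⟨hmem, hmem⟩), if_pos rfl]
        congr 2
        rw [← Finset.erase_union_distrib,
          Finset.card_erase_of_mem (Finset.mem_union_left _ hv), hU]
      · rw [if_neg hv']
        have h2 : ∀ w ∈ T',
            (if v ∈ T.erase v ∪ T'.erase w ∨ w ∈ T.erase v ∪ T'.erase w then 0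
              else (if v = w then q else q ^ 2) * p ^ (T.erase v ∪ T'.erase w).card)
            = if w ∈ T then 0 else q ^ 2 * p ^ (2 * ω - t - 2) := by
          intro w hw
          have hvw : v ≠ w := fun h => hv' (h ▸ hw)
          by_cases hw' : w ∈ T
          · rw [if_pos (Or.inr (Finset.mem_union_left _
              (Finset.mem_erase.2 ⟨fun h => hvw h.symm, hw'⟩))), if_pos hw']
          · have hmv : v ∉ T.erase v ∪ T'.erase w := by
              simp only [Finset.mem_union, Finset.mem_erase]
              rintro (⟨h1, _⟩ | ⟨_, h2⟩)
              · exact h1 rfl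
              · exact hv' h2
            have hmw : w ∉ T.erase v ∪ T'.erase w := by
              simp only [Finset.mem_union, Finset.mem_erase]
              rintro (⟨_, h1⟩ | ⟨h2, _⟩)
              · exact hw' h1
              · exact h2 rfl
            rw [if_neg (by push_neg; exact ⟨hmv, hmw⟩), if_neg hvw, if_neg hw']
            congr 2
            have hset : T.erase v ∪ T'.erase w = ((T ∪ T').erase v).erase w := by
              ext x
              simp only [Finset.mem_union, Finset.mem_erase]
              constructor
              · rintro (⟨hxv, hxT⟩ | ⟨hxw, hxT'⟩)
                · exact ⟨fun h => hw' (h ▸ hxT), hxv, Or.inl hxT⟩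
                · exact ⟨hxw, fun h => hv' (h ▸ hxT'), Or.inr hxT'⟩
              · rintro ⟨hxw, hxv, hxT | hxT'⟩
                · exact Or.inl ⟨hxv, hxT⟩
                · exact Or.inr ⟨hxw, hxT'⟩
            rw [hset, Finset.card_erase_of_mem
              (Finset.mem_erase.2 ⟨fun h => hvw h.symm, Finset.mem_union_right _ hw⟩),
              Finset.card_erase_of_mem (Finset.mem_union_left _ hv), hU]
            omega
        rw [Finset.sum_congr rfl h2, Finset.sum_ite, Finset.sum_const, Finset.sum_const,
          smul_zero, zero_add]
        have hfil : T'.filter (fun w => ¬w ∈ T) = T' \ T := (Finset.sdiff_eq_filter T' T).symm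
        rw [hfil, hT'd, nsmul_eq_mul]
    rw [Finset.sum_congr rfl hinner, Finset.sum_ite, Finset.sum_const, Finset.sum_const]
    have hfil1 : T.filter (fun v => v ∈ T') = T ∩ T' := Finset.filter_mem_eq_inter
    have hfil2 : T.filter (fun v => ¬v ∈ T') = T \ T' := (Finset.sdiff_eq_filter T T').symm
    rw [hfil1, hfil2, ht, hTd, nsmul_eq_mul, nsmul_eq_mul]
  -- assembly
  have expand : ∀ b : V → Bool,
      (∏ v : V, (if b v then p else q)) * (fT α β T b * fT α β T' b)
      = α ^ 2 * ((∏ u : V, (if b u then p else q)) *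
            ((∑ v ∈ T, (1 - ind (b v)) * ∏ u ∈ T.erase v, ind (b u)) *
              ∑ w ∈ T', (1 - ind (b w)) * ∏ u ∈ T'.erase w, ind (b u)))
        + α * β * ((∏ u : V, (if b u then p else q)) *
            ((∑ v ∈ T, (1 - ind (b v)) * ∏ u ∈ T.erase v, ind (b u)) * ∏ v ∈ T', ind (b v)))
        + α * β * ((∏ u : V, (if b u then p else q)) *
            ((∏ v ∈ T, ind (b v)) * ∑ w ∈ T', (1 - ind (b w)) * ∏ u ∈ T'.erase w, ind (b u)))
        + β ^ 2 * ((∏ u : V, (if b u then p else q)) *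
            ((∏ v ∈ T, ind (b v)) * ∏ v ∈ T', ind (b v))) := by
    intro b
    simp only [fT]
    ring
  rw [Finset.sum_congr rfl fun b _ => expand b]
  rw [Finset.sum_add_distrib, Finset.sum_add_distrib, Finset.sum_add_distrib,
    ← Finset.mul_sum, ← Finset.mul_sum, ← Finset.mul_sum, ← Finset.mul_sum,
    hX1, hX2, hX3, hX4]
  ring
end

section
/- Fix an integer ω ≥ 2 and reals α, β with ω p^{ω−1} q α + p^ω β = 1, where q = 1−p and p ∈ (0,1). With f(T) as in the clique estimator, if |T ∩ T'| = 1 then Cov(f(T), f(T')) = (q/p)(1 − α p^{ω−1})². -/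
section AuxStmt8

variable {V : Type*} [Fintype V] [DecidableEq V]

lemma moment (p : ℝ) (S : Finset V) :
    ∑ b : V → Bool, (∏ v : V, (if b v then p else 1 - p)) * ∏ u ∈ S, ind (b u)
      = p ^ S.card := by
  have h1 : ∀ b : V → Bool,
      (∏ v : V, (if b v then p else 1 - p)) * ∏ u ∈ S, ind (b u)
      = ∏ v : V, ((if b v then p else 1 - p) * (if v ∈ S then ind (b v) else 1)) := by
    intro b
    rw [Finset.prod_mul_distrib]
    congr 1
    rw [Finset.prod_ite_mem, Finset.univ_inter]
  simp_rw [h1]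
  rw [← Fintype.piFinset_univ,
    ← Finset.prod_univ_sum (fun _ => (Finset.univ : Finset Bool))
      (fun v y => (if y then p else 1 - p) * if v ∈ S then ind y else 1)]
  have h2 : ∀ v : V, (∑ x : Bool, (if x then p else 1 - p) * (if v ∈ S then ind x else 1))
      = if v ∈ S then p else 1 := by
    intro v
    rw [Fintype.sum_bool]
    by_cases h : v ∈ S <;> simp [h, ind]
  simp_rw [h2]
  rw [Finset.prod_ite_mem, Finset.univ_inter, Finset.prod_const]

omit [Fintype V] in
lemma P_union (b : V → Bool) (S S' : Finset V) :
    (∏ u ∈ S, ind (b u)) * (∏ u ∈ S', ind (b u)) = ∏ u ∈ S ∪ S', ind (b u) := by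
  rw [← Finset.prod_union_inter]
  have hsub : S ∩ S' ⊆ S ∪ S' := (Finset.inter_subset_left).trans Finset.subset_union_left
  rw [← Finset.prod_sdiff hsub]
  have : ∀ x : Bool, ind x * ind x = ind x := by intro x; cases x <;> simp [ind]
  rw [mul_assoc, ← Finset.prod_mul_distrib]
  simp_rw [this]

omit [Fintype V] in
lemma fT_eq (α β : ℝ) (T : Finset V) (b : V → Bool) :
    fT α β T b = α * ∑ v ∈ T, ∏ u ∈ T.erase v, ind (b u)
      + (β - α * T.card) * ∏ v ∈ T, ind (b v) := by
  unfold fT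
  have h : ∀ v ∈ T, (1 - ind (b v)) * ∏ u ∈ T.erase v, ind (b u)
      = (∏ u ∈ T.erase v, ind (b u)) - ∏ u ∈ T, ind (b u) := by
    intro v hv
    rw [sub_mul, one_mul, Finset.mul_prod_erase T (fun u => ind (b u)) hv]
  rw [Finset.sum_congr rfl h, Finset.sum_sub_distrib, Finset.sum_const, nsmul_eq_mul]
  ring

lemma Ef_eq (p α β : ℝ) (T : Finset V) :
    ∑ b : V → Bool, (∏ v : V, (if b v then p else 1 - p)) * fT α β T b
      = α * ∑ v ∈ T, p ^ (T.erase v).card + (β - α * T.card) * p ^ T.card := by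
  have h : ∀ b : V → Bool,
      (∏ v : V, (if b v then p else 1 - p)) * fT α β T b
      = α * ∑ v ∈ T, ((∏ v : V, (if b v then p else 1 - p)) * ∏ u ∈ T.erase v, ind (b u))
        + (β - α * T.card) * ((∏ v : V, (if b v then p else 1 - p)) * ∏ v ∈ T, ind (b v)) := by
    intro b
    rw [fT_eq, ← Finset.mul_sum]
    ring
  simp_rw [h]
  rw [Finset.sum_add_distrib, ← Finset.mul_sum, ← Finset.mul_sum, Finset.sum_comm,
    moment]
  congr 2
  exact Finset.sum_congr rfl fun v _ => moment p _

lemma Eff_eq (p α β : ℝ) (T T' : Finset V) :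
    ∑ b : V → Bool, (∏ v : V, (if b v then p else 1 - p)) * (fT α β T b * fT α β T' b)
      = α ^ 2 * ∑ v ∈ T, ∑ v' ∈ T', p ^ ((T.erase v ∪ T'.erase v').card)
        + α * (β - α * T'.card) * ∑ v ∈ T, p ^ ((T.erase v ∪ T').card)
        + α * (β - α * T.card) * ∑ v' ∈ T', p ^ ((T ∪ T'.erase v').card)
        + (β - α * T.card) * (β - α * T'.card) * p ^ ((T ∪ T').card) := by
  have key : ∀ b : V → Bool, fT α β T b * fT α β T' b
      = α ^ 2 * ∑ v ∈ T, ∑ v' ∈ T', ∏ u ∈ T.erase v ∪ T'.erase v', ind (b u)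
        + α * (β - α * T'.card) * ∑ v ∈ T, ∏ u ∈ T.erase v ∪ T', ind (b u)
        + α * (β - α * T.card) * ∑ v' ∈ T', ∏ u ∈ T ∪ T'.erase v', ind (b u)
        + (β - α * T.card) * (β - α * T'.card) * ∏ u ∈ T ∪ T', ind (b u) := by
    intro b
    rw [fT_eq α β T b, fT_eq α β T' b]
    simp_rw [← P_union]
    rw [← Finset.sum_mul_sum, ← Finset.sum_mul, ← Finset.mul_sum]
    ring
  have h : ∀ b : V → Bool,
      (∏ v : V, (if b v then p else 1 - p)) * (fT α β T b * fT α β T' b)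
      = α ^ 2 * ∑ v ∈ T, ∑ v' ∈ T',
            ((∏ v : V, (if b v then p else 1 - p)) * ∏ u ∈ T.erase v ∪ T'.erase v', ind (b u))
        + α * (β - α * T'.card) * ∑ v ∈ T,
            ((∏ v : V, (if b v then p else 1 - p)) * ∏ u ∈ T.erase v ∪ T', ind (b u))
        + α * (β - α * T.card) * ∑ v' ∈ T',
            ((∏ v : V, (if b v then p else 1 - p)) * ∏ u ∈ T ∪ T'.erase v', ind (b u))
        + (β - α * T.card) * (β - α * T'.card) *
            ((∏ v : V, (if b v then p else 1 - p)) * ∏ u ∈ T ∪ T', ind (b u)) := by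
    intro b
    rw [key b]
    simp_rw [← Finset.mul_sum]
    ring
  have e1 : ∑ b : V → Bool, ∑ v ∈ T, ∑ v' ∈ T',
      ((∏ v : V, (if b v then p else 1 - p)) * ∏ u ∈ T.erase v ∪ T'.erase v', ind (b u))
      = ∑ v ∈ T, ∑ v' ∈ T', p ^ ((T.erase v ∪ T'.erase v').card) := by
    rw [Finset.sum_comm]
    refine Finset.sum_congr rfl fun v _ => ?_
    rw [Finset.sum_comm]
    exact Finset.sum_congr rfl fun v' _ => moment p _
  have e2 : ∑ b : V → Bool, ∑ v ∈ T,
      ((∏ v : V, (if b v then p else 1 - p)) * ∏ u ∈ T.erase v ∪ T', ind (b u))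
      = ∑ v ∈ T, p ^ ((T.erase v ∪ T').card) := by
    rw [Finset.sum_comm]
    exact Finset.sum_congr rfl fun v _ => moment p _
  have e3 : ∑ b : V → Bool, ∑ v' ∈ T',
      ((∏ v : V, (if b v then p else 1 - p)) * ∏ u ∈ T ∪ T'.erase v', ind (b u))
      = ∑ v' ∈ T', p ^ ((T ∪ T'.erase v').card) := by
    rw [Finset.sum_comm]
    exact Finset.sum_congr rfl fun v' _ => moment p _
  simp_rw [h]
  rw [Finset.sum_add_distrib, Finset.sum_add_distrib, Finset.sum_add_distrib,
    ← Finset.mul_sum, ← Finset.mul_sum, ← Finset.mul_sum, ← Finset.mul_sum,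
    e1, e2, e3, moment]

end AuxStmt8

/-- Under the unbiasedness constraint `ω p^{ω−1} q α + p^ω β = 1`, for two
ω-sets sharing exactly one vertex,
`Cov(f(T), f(T')) = (q/p)(1 − α p^{ω−1})²`. -/

theorem stmt_8 {V : Type*} [Fintype V] [DecidableEq V]
    (ω : ℕ) (hω : 2 ≤ ω) (α β : ℝ)
    (p q : ℝ) (hq : q = 1 - p) (hp0 : 0 < p) (hp1 : p < 1)
    (hunbiased : (ω : ℝ) * p ^ (ω - 1) * q * α + p ^ ω * β = 1)
    (T T' : Finset V) (hT : T.card = ω) (hT' : T'.card = ω)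
    (ht : (T ∩ T').card = 1) :
    (∑ b : V → Bool,
        (∏ v : V, (if b v then p else q)) * (fT α β T b * fT α β T' b))
      - (∑ b : V → Bool,
          (∏ v : V, (if b v then p else q)) * fT α β T b)
        * (∑ b : V → Bool,
            (∏ v : V, (if b v then p else q)) * fT α β T' b)
      = (q / p) * (1 - α * p ^ (ω - 1)) ^ 2 := by
  obtain ⟨k, rfl⟩ : ∃ k, ω = k + 2 := ⟨ω - 2, by omega⟩
  subst hq
  have hk1 : k + 2 - 1 = k + 1 := by omega
  rw [hk1] at hunbiased ⊢
  obtain ⟨w, hw⟩ := Finset.card_eq_one.mp ht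
  have hwm : w ∈ T ∩ T' := hw ▸ Finset.mem_singleton_self w
  have hwT : w ∈ T := Finset.mem_of_mem_inter_left hwm
  have hwT' : w ∈ T' := Finset.mem_of_mem_inter_right hwm
  have hmem : ∀ x, x ∈ T → x ∈ T' → x = w := fun x hx hx' =>
    Finset.mem_singleton.mp (hw ▸ Finset.mem_inter.mpr ⟨hx, hx'⟩)
  -- intersections
  have hi1 : ∀ v v' : V, (T.erase v) ∩ (T'.erase v') = (({w} : Finset V).erase v).erase v' := by
    intro v v'
    ext x
    simp only [Finset.mem_inter, Finset.mem_erase, Finset.mem_singleton]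
    constructor
    · rintro ⟨⟨hxv, hxT⟩, hxv', hxT'⟩
      exact ⟨hxv', hxv, hmem x hxT hxT'⟩
    · rintro ⟨hxv', hxv, rfl⟩
      exact ⟨⟨hxv, hwT⟩, hxv', hwT'⟩
  have hi2 : ∀ v : V, (T.erase v) ∩ T' = ({w} : Finset V).erase v := by
    intro v
    ext x
    simp only [Finset.mem_inter, Finset.mem_erase, Finset.mem_singleton]
    constructor
    · rintro ⟨⟨hxv, hxT⟩, hxT'⟩
      exact ⟨hxv, hmem x hxT hxT'⟩
    · rintro ⟨hxv, rfl⟩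
      exact ⟨⟨hxv, hwT⟩, hwT'⟩
  have hi3 : ∀ v' : V, T ∩ (T'.erase v') = ({w} : Finset V).erase v' := by
    intro v'
    ext x
    simp only [Finset.mem_inter, Finset.mem_erase, Finset.mem_singleton]
    constructor
    · rintro ⟨hxT, hxv', hxT'⟩
      exact ⟨hxv', hmem x hxT hxT'⟩
    · rintro ⟨hxv', rfl⟩
      exact ⟨hwT, hxv', hwT'⟩
  have hsc : ∀ v : V, (({w} : Finset V).erase v).card = if v = w then 0 else 1 := by
    intro v
    split_ifs with h
    · subst h; simp
    · rw [Finset.erase_eq_of_notMem (by simp [h]), Finset.card_singleton]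
  have hsc2 : ∀ v v' : V, ((({w} : Finset V).erase v).erase v').card
      = if v = w ∨ v' = w then 0 else 1 := by
    intro v v'
    by_cases h : v = w
    · subst h
      simp
    · rw [Finset.erase_eq_of_notMem (a := v) (by simp [h]), hsc]
      simp [h]
  -- union cards
  have hcu1 : ∀ v ∈ T, ∀ v' ∈ T', (T.erase v ∪ T'.erase v').card
      = if v = w ∨ v' = w then 2*k+2 else 2*k+1 := by
    intro v hv v' hv'
    have h1 := Finset.card_union_add_card_inter (T.erase v) (T'.erase v')
    rw [hi1 v v', hsc2 v v', Finset.card_erase_of_mem hv, Finset.card_erase_of_mem hv',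
      hT, hT'] at h1
    split_ifs at h1 ⊢ with h
    · omega
    · omega
  have hcu2 : ∀ v ∈ T, (T.erase v ∪ T').card = if v = w then 2*k+3 else 2*k+2 := by
    intro v hv
    have h1 := Finset.card_union_add_card_inter (T.erase v) T'
    rw [hi2 v, hsc v, Finset.card_erase_of_mem hv, hT, hT'] at h1
    split_ifs at h1 ⊢ with h
    · omega
    · omega
  have hcu3 : ∀ v' ∈ T', (T ∪ T'.erase v').card = if v' = w then 2*k+3 else 2*k+2 := by
    intro v' hv'
    have h1 := Finset.card_union_add_card_inter T (T'.erase v')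
    rw [hi3 v', hsc v', Finset.card_erase_of_mem hv', hT, hT'] at h1
    split_ifs at h1 ⊢ with h
    · omega
    · omega
  have hcu4 : (T ∪ T').card = 2*k+3 := by
    have h1 := Finset.card_union_add_card_inter T T'
    rw [ht, hT, hT'] at h1
    omega
  -- sum computations
  have hS1 : (∑ v ∈ T, ∑ v' ∈ T', p ^ ((T.erase v ∪ T'.erase v').card))
      = ((k:ℝ)+1) * (((k:ℝ)+1) * p^(2*k+1) + p^(2*k+2)) + ((k:ℝ)+2) * p^(2*k+2) := by
    rw [← Finset.sum_erase_add T _ hwT]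
    have inner : ∀ v ∈ T.erase w, ∑ v' ∈ T', p ^ ((T.erase v ∪ T'.erase v').card)
        = ((k:ℝ)+1) * p^(2*k+1) + p^(2*k+2) := by
      intro v hv
      obtain ⟨hvw, hvT⟩ := Finset.mem_erase.mp hv
      rw [← Finset.sum_erase_add T' _ hwT']
      have h2 : ∀ v' ∈ T'.erase w, p ^ ((T.erase v ∪ T'.erase v').card) = p^(2*k+1) := by
        intro v' hv'
        obtain ⟨hv'w, hv'T⟩ := Finset.mem_erase.mp hv'
        rw [hcu1 v hvT v' hv'T, if_neg (by tauto)]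
      rw [Finset.sum_congr rfl h2, Finset.sum_const, Finset.card_erase_of_mem hwT', hT',
        nsmul_eq_mul, hcu1 v hvT w hwT', if_pos (Or.inr rfl)]
      push_cast
      ring
    rw [Finset.sum_congr rfl inner, Finset.sum_const, Finset.card_erase_of_mem hwT, hT,
      nsmul_eq_mul]
    have hwterm : ∑ v' ∈ T', p ^ ((T.erase w ∪ T'.erase v').card) = ((k:ℝ)+2) * p^(2*k+2) := by
      have h2 : ∀ v' ∈ T', p ^ ((T.erase w ∪ T'.erase v').card) = p^(2*k+2) := by
        intro v' hv'
        rw [hcu1 w hwT v' hv', if_pos (Or.inl rfl)]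
      rw [Finset.sum_congr rfl h2, Finset.sum_const, hT', nsmul_eq_mul]
      push_cast; ring
    rw [hwterm]
    push_cast
    ring
  have hS2 : (∑ v ∈ T, p ^ ((T.erase v ∪ T').card)) = ((k:ℝ)+1) * p^(2*k+2) + p^(2*k+3) := by
    rw [← Finset.sum_erase_add T _ hwT]
    have h2 : ∀ v ∈ T.erase w, p ^ ((T.erase v ∪ T').card) = p^(2*k+2) := by
      intro v hv
      obtain ⟨hvw, hvT⟩ := Finset.mem_erase.mp hv
      rw [hcu2 v hvT, if_neg hvw]
    rw [Finset.sum_congr rfl h2, Finset.sum_const, Finset.card_erase_of_mem hwT, hT,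
      nsmul_eq_mul, hcu2 w hwT, if_pos rfl]
    push_cast; ring
  have hS3 : (∑ v' ∈ T', p ^ ((T ∪ T'.erase v').card)) = ((k:ℝ)+1) * p^(2*k+2) + p^(2*k+3) := by
    rw [← Finset.sum_erase_add T' _ hwT']
    have h2 : ∀ v' ∈ T'.erase w, p ^ ((T ∪ T'.erase v').card) = p^(2*k+2) := by
      intro v' hv'
      obtain ⟨hv'w, hv'T⟩ := Finset.mem_erase.mp hv'
      rw [hcu3 v' hv'T, if_neg hv'w]
    rw [Finset.sum_congr rfl h2, Finset.sum_const, Finset.card_erase_of_mem hwT', hT',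
      nsmul_eq_mul, hcu3 w hwT', if_pos rfl]
    push_cast; ring
  have hE : ∀ S : Finset V, S.card = k + 2 →
      (∑ b : V → Bool, (∏ v : V, (if b v then p else 1 - p)) * fT α β S b) = 1 := by
    intro S hS
    rw [Ef_eq]
    have h2 : ∀ v ∈ S, p ^ ((S.erase v).card) = p^(k+1) := by
      intro v hv
      rw [Finset.card_erase_of_mem hv, hS, hk1]
    rw [Finset.sum_congr rfl h2, Finset.sum_const, hS, nsmul_eq_mul]
    push_cast at hunbiased ⊢
    linear_combination hunbiased
  rw [Eff_eq, hS1, hS2, hS3, hcu4, hE T hT, hE T' hT', hT, hT']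
  have hpk : p ^ (k+2) ≠ 0 := pow_ne_zero _ (ne_of_gt hp0)
  have hβ : β = (1 - ((k:ℝ)+2) * p^(k+1) * (1-p) * α) / p^(k+2) := by
    rw [eq_div_iff hpk]
    push_cast at hunbiased
    linear_combination hunbiased
  rw [hβ]
  push_cast
  field_simp
  ring
end

section
/- For every positive integer n, lcm(1, 2, …, n) ≥ 2^{n−1}. -/
/-!
Nair's argument. For a prime `p`, the `p`-adic valuation of `C(n, k)` counts the carries in
`k + (n - k)` in base `p`, and there is no carry at a position `i` with `p ^ i ∣ k`; hence
`v_p (k * C(n, k)) ≤ log_p n = v_p (lcm(1, …, n))`, i.e. `k * C(n, k) ∣ lcm(1, …, n)`.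
Applied to `C(2m, m) * m` and to `C(2m + 1, m + 1) * (m + 1) = C(2m, m) * (2m + 1)`, with `m`
and `2m + 1` coprime, this gives `m (2m + 1) C(2m, m) ∣ lcm(1, …, 2m + 1)`, and
`C(2m, m) ≥ 4 ^ m / 2m` makes the left side at least `2 ^ (2m + 1)` once `m ≥ 2`.
-/

open Finset

namespace Nat

theorem factorization_choose_add_factorization_le_log {p n k : ℕ} (hp : p.Prime) (hk0 : k ≠ 0)
    (hkn : k ≤ n) : (choose n k).factorization p + k.factorization p ≤ log p n := by
  have hk : k < p ^ (log p n).succ :=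
    hkn.trans_lt (lt_pow_succ_log_self hp.one_lt n)
  have hdisj : Disjoint {i ∈ Ico 1 (log p n).succ | p ^ i ≤ k % p ^ i + (n - k) % p ^ i}
      {i ∈ Ico 1 (log p n).succ | p ^ i ∣ k} := by
    simp +contextual [Finset.disjoint_right, dvd_iff_mod_eq_zero, Nat.mod_lt _ (pow_pos hp.pos _)]
  rw [factorization_choose hp hkn (lt_succ_self _),
    factorization_eq_card_pow_dvd_of_lt hp (pos_of_ne_zero hk0) hk,
    ← card_union_of_disjoint hdisj, filter_union_right]
  exact (card_filter_le _ _).trans_eq (by simp)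

theorem mul_choose_dvd_lcmUpto {n k : ℕ} (hk0 : k ≠ 0) (hkn : k ≤ n) :
    k * choose n k ∣ lcmUpto n := by
  rw [← factorization_prime_le_iff_dvd (mul_ne_zero hk0 (choose_ne_zero hkn))
    (lcmUpto_ne_zero n)]
  intro p hp
  rw [factorization_mul hk0 (choose_ne_zero hkn), factorization_lcmUpto n hp,
    Finsupp.add_apply, add_comm]
  exact factorization_choose_add_factorization_le_log hp hk0 hkn

theorem lcmUpto_dvd_lcmUpto {m n : ℕ} (h : m ≤ n) : lcmUpto m ∣ lcmUpto n :=
  lcm_mono (Icc_subset_Icc_right h)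

theorem mul_two_mul_add_one_mul_centralBinom_dvd_lcmUpto {m : ℕ} (hm : m ≠ 0) :
    m * (2 * m + 1) * centralBinom m ∣ lcmUpto (2 * m + 1) := by
  have hm_dvd : m * centralBinom m ∣ lcmUpto (2 * m + 1) :=
    (mul_choose_dvd_lcmUpto hm (by omega)).trans (lcmUpto_dvd_lcmUpto (by omega))
  have hsucc_dvd : (2 * m + 1) * centralBinom m ∣ lcmUpto (2 * m + 1) := by
    have h := mul_choose_dvd_lcmUpto (n := 2 * m + 1) (k := m + 1) m.succ_ne_zero (by omega)
    rwa [mul_comm, ← add_one_mul_choose_eq (2 * m) m] at h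
  have hcop : Coprime m (2 * m + 1) := by simp [add_comm, mul_comm]
  calc m * (2 * m + 1) * centralBinom m
      = Nat.lcm (m * centralBinom m) ((2 * m + 1) * centralBinom m) := by
        rw [lcm_mul_right, hcop.lcm_eq_mul]
    _ ∣ lcmUpto (2 * m + 1) := Nat.lcm_dvd hm_dvd hsucc_dvd

theorem two_pow_le_lcmUpto_two_mul_add_one {m : ℕ} (hm : 2 ≤ m) :
    2 ^ (2 * m + 1) ≤ lcmUpto (2 * m + 1) := by
  have hcentral : 4 ^ m ≤ 2 * m * centralBinom m :=
    four_pow_le_two_mul_self_mul_centralBinom m (by omega)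
  have hdouble : 2 * 2 ^ (2 * m + 1) ≤ 2 * (m * (2 * m + 1) * centralBinom m) :=
    calc 2 * 2 ^ (2 * m + 1) = 4 * 4 ^ m := by rw [pow_succ, pow_mul]; ring
      _ ≤ (2 * m + 1) * (2 * m * centralBinom m) := by gcongr; omega
      _ = 2 * (m * (2 * m + 1) * centralBinom m) := by ring
  calc 2 ^ (2 * m + 1) ≤ m * (2 * m + 1) * centralBinom m := by omega
    _ ≤ lcmUpto (2 * m + 1) := le_of_dvd (lcmUpto_pos _)
      (mul_two_mul_add_one_mul_centralBinom_dvd_lcmUpto (by omega))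

end Nat

theorem stmt_11_general (n : ℕ) :
    2 ^ (n - 1) ≤ (Finset.Icc 1 n).lcm id := by
  change 2 ^ (n - 1) ≤ Nat.lcmUpto n
  by_cases hsmall : n ≤ 4
  · interval_cases n <;> decide
  set m := (n - 1) / 2
  calc 2 ^ (n - 1) ≤ 2 ^ (2 * m + 1) := Nat.pow_le_pow_right two_pos (by omega)
    _ ≤ Nat.lcmUpto (2 * m + 1) := Nat.two_pow_le_lcmUpto_two_mul_add_one (by omega)
    _ ≤ Nat.lcmUpto n :=
      Nat.le_of_dvd (Nat.lcmUpto_pos n) (Nat.lcmUpto_dvd_lcmUpto (by omega))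

/-- Nair's bound: `lcm(1, 2, …, n) ≥ 2^{n−1}` for every positive integer `n`. -/
theorem stmt_11 (n : ℕ) (hn : 0 < n) :
    2 ^ (n - 1) ≤ (Finset.Icc 1 n).lcm id :=
  stmt_11_general n
end
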